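/- Let X = ℂPⁿ with v_i = p_*(z_i ∂/∂z_i) (0 ≤ i ≤ n), W = span_ℂ{v_1,…,v_n}, W^k = ∧^k W and W^0 = ℂ. For 0 ≤ k ≤ n, let S_k be the set of all I ∈ M ≅ ℤⁿ such that ⟨I, e_i⟩ = m_i ≥ −1 for all 0 ≤ i ≤ n and |I| ≤ k, and for |I| ≤ k ≤ n set V_I^k = ℂ(χ^I · 𝒱_I) ∧ W^{k−|I|}. Then the (ℂ*)ⁿ-representation on H^0(X, ∧^k 𝒯_X) induced by the torus action has weight space decomposition H^0(X, ∧^k 𝒯_X) = ⊕_{I ∈ S_k} V_I^k, where S_k is the set of all weights and V_I^k is the weight space of weight I. -/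

import Mathlib

/-!
Formalization of statements from "Poisson Cohomology of holomorphic toric Poisson
manifolds. I." (W. Hong).

Modeling conventions.  Mathlib has no holomorphic geometry of ℂPⁿ, so we use the
standard faithful algebraic model: a holomorphic multivector field on a toric variety
is determined by its restriction to the dense open torus, where (in the invariant
frame and with Laurent-monomial coefficients) multivector fields form the algebra
`MV n = AddMonoidAlgebra (ExteriorAlgebra ℂ ℂⁿ) ℤⁿ`: the element `single I ω`
represents `χ^I ⊗ ω` (`χ^I` the Laurent monomial of weight `I`, `ω` a constant
multivector in the frame `v_1, …, v_n`, `v_i = ρ(e_i)`).  Multiplication is the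
wedge product.  Similarly `AMV n` models multivector fields on ℂ^{n+1}∖{0} in the
frame `u_i = z_i ∂/∂z_i`.  Holomorphic multivector fields on ℂPⁿ are defined as the
image under `p_*` of the k-vector fields on ℂ^{n+1} with homogeneous polynomial
coefficients of degree k (this is exactly the classical description of
`H⁰(ℂPⁿ, ∧ᵏ𝒯)`, due to Bondal).  The Schouten differential `d_π = [π,·]` of a
torus-invariant bivector `π = ρ(Π)` acts weightwise by
`[π, χ^I ⊗ ω] = χ^I ⊗ (ι(ι_I Π) ∧ ω)`.
-/

noncomputable section
open Finset

namespace CPn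

variable (n : ℕ)

/-- Laurent multivector fields on the open torus (ℂ*)ⁿ ⊆ ℂPⁿ, in the invariant frame. -/
abbrev MV := AddMonoidAlgebra (ExteriorAlgebra ℂ (Fin n → ℂ)) (Fin n → ℤ)

/-- Ambient model: multivector fields on ℂ^{n+1}∖{0} with Laurent-monomial
coefficients, in the frame u_i = z_i ∂/∂z_i. -/
abbrev AMV := AddMonoidAlgebra (ExteriorAlgebra ℂ (Fin (n+1) → ℂ)) (Fin (n+1) → ℤ)

/-- The Laurent monomial χ^I as a multivector field (of degree 0). -/
def χ (I : Fin n → ℤ) : MV n := AddMonoidAlgebra.single I 1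

/-- The vectors e_0 = −(e_1+⋯+e_n), e_1, …, e_n in N_ℂ = ℂⁿ. -/
def EE : Fin (n+1) → (Fin n → ℂ) :=
  Fin.cases (fun _ => -1) (fun j => Pi.single j 1)

/-- The holomorphic vector fields v_i = ρ(e_i) = p_*(z_i ∂/∂z_i), 0 ≤ i ≤ n. -/
def v (i : Fin (n+1)) : MV n :=
  AddMonoidAlgebra.single 0 (ExteriorAlgebra.ι ℂ (EE n i))

/-- W = span_ℂ{v_1,…,v_n} = ρ(N_ℂ). -/
def W : Submodule ℂ (MV n) :=
  Submodule.span ℂ {x | ∃ i : Fin (n+1), i ≠ 0 ∧ x = v n i}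

/-- Extension of a weight I ∈ M ≅ ℤⁿ to (m_0, m_1, …, m_n), m_0 = −Σᵢ m_i, m_i = ⟨I,e_i⟩. -/
def mext (I : Fin n → ℤ) : Fin (n+1) → ℤ :=
  Fin.cases (-(∑ j, I j)) I

/-- The set of indices 0 ≤ i ≤ n with m_i = −1. -/
def deg1Set (I : Fin n → ℤ) : Finset (Fin (n+1)) :=
  univ.filter fun i => mext n I i = -1

/-- |I| = number of entries of (m_0,…,m_n) equal to −1. -/
def wt (I : Fin n → ℤ) : ℕ := (deg1Set n I).card

/-- 𝒱_I = v_{i_1} ∧ ⋯ ∧ v_{i_l}, where m_{i_1},…,m_{i_l} are the entries equal to −1. -/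
def VI (I : Fin n → ℤ) : MV n :=
  (((deg1Set n I).sort (· ≤ ·)).map (v n)).prod

/-- χ^I · 𝒱_I. -/
def chiVI (I : Fin n → ℤ) : MV n := χ n I * VI n I

/-- ℰ_I = e_{i_1} ∧ ⋯ ∧ e_{i_l} ∈ ∧^l N_ℂ (inside the exterior algebra of N_ℂ). -/
def EI (I : Fin n → ℤ) : ExteriorAlgebra ℂ (Fin n → ℂ) :=
  (((deg1Set n I).sort (· ≤ ·)).map fun i => ExteriorAlgebra.ι ℂ (EE n i)).prod

/-- V_I^k = ℂ(χ^I·𝒱_I) ∧ W^{k−|I|}. -/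
def VIk (I : Fin n → ℤ) (k : ℕ) : Submodule ℂ (MV n) :=
  Submodule.span ℂ {chiVI n I} * (W n) ^ (k - wt n I)

/-- u_i = z_i ∂/∂z_i on ℂ^{n+1}. -/
def uu (i : Fin (n+1)) : AMV n :=
  AddMonoidAlgebra.single 0 (ExteriorAlgebra.ι ℂ (Pi.single i 1))

/-- The Euler vector field e⃗ = Σ_i z_i ∂/∂z_i. -/
def eulerA : AMV n := ∑ i, uu n i

/-- The derivative of p : ℂ^{n+1}∖{0} → ℂPⁿ on the invariant frame:
the frame vector of u_i is sent to e_i (so e_0 = −Σ e_j); in coordinates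
w ↦ (w_j − w_0)_{1≤j≤n}. -/
def q : (Fin (n+1) → ℂ) →ₗ[ℂ] (Fin n → ℂ) :=
  LinearMap.pi fun j =>
    (LinearMap.proj j.succ : (Fin (n+1) → ℂ) →ₗ[ℂ] ℂ) -
      (LinearMap.proj (0 : Fin (n+1)) : (Fin (n+1) → ℂ) →ₗ[ℂ] ℂ)

/-- Pushforward p_* along p : ℂ^{n+1}∖{0} → ℂPⁿ (on torus-invariant fields, i.e.
those of weight a with Σ a = 0, this is the honest pushforward; the weight a
corresponds to the monomial of weight (a_1,…,a_n) in the coordinates t_j = z_j/z_0). -/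
def pstar : AMV n →ₗ[ℂ] MV n :=
  (Finsupp.lsum ℂ fun a =>
    (AddMonoidAlgebra.lsingle (fun j : Fin n => a j.succ) :
        ExteriorAlgebra ℂ (Fin n → ℂ) →ₗ[ℂ] MV n) ∘ₗ
      (ExteriorAlgebra.map (q n)).toLinearMap : ((Fin (n+1) → ℤ) →₀ ExteriorAlgebra ℂ (Fin (n+1) → ℂ)) →ₗ[ℂ] MV n) ∘ₗ
    (AddMonoidAlgebra.coeffLinearEquiv ℂ : AMV n ≃ₗ[ℂ] _).toLinearMap

/-- u_{i_1} ∧ ⋯ ∧ u_{i_k} for T = {i_1 < ⋯ < i_k} (constant-coefficient part). -/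
def wedgeT (T : Finset (Fin (n+1))) : ExteriorAlgebra ℂ (Fin (n+1) → ℂ) :=
  ((T.sort (· ≤ ·)).map fun i => ExteriorAlgebra.ι ℂ (Pi.single i 1)).prod

/-- F̃_k: the k-vector fields on ℂ^{n+1} whose coefficients in the frame
∂_{i_1}∧⋯∧∂_{i_k} are homogeneous polynomials of degree k, restricted to the torus
(z^b ∂_T = z^{b−ε_T} u_T). -/
def Ftilde (k : ℕ) : Submodule ℂ (AMV n) :=
  Submodule.span ℂ
    { x | ∃ (b : Fin (n+1) → ℕ) (T : Finset (Fin (n+1))), T.card = k ∧ (∑ i, b i) = k ∧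
        x = AddMonoidAlgebra.single (fun i => (b i : ℤ) - (if i ∈ T then 1 else 0)) (wedgeT n T) }

/-- H⁰(ℂPⁿ, ∧ᵏ𝒯) = p_*(F̃_k): holomorphic k-vector fields on ℂPⁿ. -/
def H0 (k : ℕ) : Submodule ℂ (MV n) := Submodule.map (pstar n) (Ftilde n k)

/-- ι_I Π ∈ N_ℂ for Π = Σ_{i<j} a i j · e_i∧e_j, where
ι_I (e_i∧e_j) = ⟨I,e_i⟩e_j − ⟨I,e_j⟩e_i. -/
def contr (a : Fin n → Fin n → ℂ) (I : Fin n → ℤ) : Fin n → ℂ := fun j =>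
  ∑ p ∈ univ.filter (fun p : Fin n × Fin n => p.1 < p.2),
    a p.1 p.2 * ((I p.1 : ℂ) * (if p.2 = j then 1 else 0) -
      (I p.2 : ℂ) * (if p.1 = j then 1 else 0))

/-- The toric bivector field π = Σ_{1≤i<j≤n} a i j · v_i ∧ v_j. -/
def piT (a : Fin n → Fin n → ℂ) : MV n :=
  ∑ p ∈ univ.filter (fun p : Fin n × Fin n => p.1 < p.2),
    a p.1 p.2 • (v n p.1.succ * v n p.2.succ)

/-- The Poisson differential d_π = [π, ·] (Schouten bracket with π = ρ(Π)):
on the toric frame it is given weightwise by [π, χ^I ⊗ ω] = χ^I ⊗ (ι(ι_I Π) ∧ ω). -/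
def dPi (a : Fin n → Fin n → ℂ) : MV n →ₗ[ℂ] MV n :=
  (Finsupp.lsum ℂ fun I =>
    (AddMonoidAlgebra.lsingle I : ExteriorAlgebra ℂ (Fin n → ℂ) →ₗ[ℂ] MV n) ∘ₗ
      LinearMap.mulLeft ℂ (ExteriorAlgebra.ι ℂ (contr n a I)) : ((Fin n → ℤ) →₀ ExteriorAlgebra ℂ (Fin n → ℂ)) →ₗ[ℂ] MV n) ∘ₗ
    (AddMonoidAlgebra.coeffLinearEquiv ℂ : MV n ≃ₗ[ℂ] _).toLinearMap

/-- S_k : weights I with all m_i ≥ −1 (0 ≤ i ≤ n) and |I| ≤ k. -/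
def Sk (k : ℕ) : Set (Fin n → ℤ) := {I | (∀ i, -1 ≤ mext n I i) ∧ wt n I ≤ k}

/-- S(k) : weights I with all m_i ≥ −1 (0 ≤ i ≤ n) and |I| = k. -/
def Slevel (k : ℕ) : Set (Fin n → ℤ) := {I | (∀ i, -1 ≤ mext n I i) ∧ wt n I = k}

/-- S_k(π) : I ∈ S_k satisfying (ι_I Π) ∧ ℰ_I = 0. -/
def SkPi (a : Fin n → Fin n → ℂ) (k : ℕ) : Set (Fin n → ℤ) :=
  {I | I ∈ Sk n k ∧ ExteriorAlgebra.ι ℂ (contr n a I) * EI n I = 0}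

/-- S(k,π) : I with |I| = k, all m_i ≥ −1, satisfying (ι_I Π) ∧ ℰ_I = 0. -/
def SlevelPi (a : Fin n → Fin n → ℂ) (k : ℕ) : Set (Fin n → ℤ) :=
  {I | I ∈ Slevel n k ∧ ExteriorAlgebra.ι ℂ (contr n a I) * EI n I = 0}

/-- Poisson cocycles in degree k: holomorphic k-vector fields killed by d_π. -/
def cocycles (a : Fin n → Fin n → ℂ) (k : ℕ) : Submodule ℂ (MV n) :=
  H0 n k ⊓ LinearMap.ker (dPi n a)

/-- Poisson coboundaries in degree k: d_π of the holomorphic (k−1)-vector fields. -/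
def cobound (a : Fin n → Fin n → ℂ) : ℕ → Submodule ℂ (MV n)
  | 0 => ⊥
  | (k+1) => Submodule.map (dPi n a) (H0 n k)

/-- The coefficient matrix of the standard Poisson structure π_st = Σ_{1≤i<j≤n} v_i∧v_j. -/
def aST : Fin n → Fin n → ℂ := fun _ _ => 1

/-- The action of the torus element t ∈ (ℂ*)ⁿ on multivector fields:
t acts on the weight-I component by the character t^I. -/
def act (t : Fin n → ℂˣ) : MV n →ₗ[ℂ] MV n :=
  (Finsupp.lsum ℂ fun I =>
    (∏ j, (t j : ℂ) ^ (I j)) •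
      (AddMonoidAlgebra.lsingle I : ExteriorAlgebra ℂ (Fin n → ℂ) →ₗ[ℂ] MV n) : ((Fin n → ℤ) →₀ ExteriorAlgebra ℂ (Fin n → ℂ)) →ₗ[ℂ] MV n) ∘ₗ
    (AddMonoidAlgebra.coeffLinearEquiv ℂ : MV n ≃ₗ[ℂ] _).toLinearMap

end CPn

/-!
Each generator `z^b ∂_T` of `F̃_k` (`|b| = |T| = k`) is a torus weight vector: its pushforward is
`χ^I ⊗ ℰ_T`, `ℰ_T = ∧_{i ∈ T} e_i`, where the extension of `I` is `m = b - 1_T`. Such a `b ≥ 0`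
exists iff `m ≥ -1` and `T ⊇ D_I = {i | m_i = -1}`, so the weight-`I` part of `H⁰` is spanned by
the `ℰ_T` with `D_I ⊆ T`, `|T| = k`. As the `e_i` span `N_ℂ`, these span `ℰ_{D_I} ∧ ∧^{k-|I|} N_ℂ`,
which is `V_I^k`. The weight spaces of the torus action are the homogeneous components
`χ^I ⊗ ∧N_ℂ`, which are independent, and `V_I^k ≠ 0` since any `n` of `e_0, …, e_n` form a basis.
-/

theorem Submodule.span_singleton_mul_eq_map_mulLeft {R A : Type*} [CommSemiring R] [Semiring A]
    [Algebra R A] (a y : A) : R ∙ (a * y) = (R ∙ y).map (LinearMap.mulLeft R a) := by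
  rw [Submodule.map_span, Set.image_singleton, LinearMap.mulLeft_apply]

theorem iSupIndep.iSup_inf_eq_of_le {ι α : Type*} [CompleteLattice α] [IsModularLattice α]
    {t s : ι → α} (ht : iSupIndep t) (hst : ∀ i, s i ≤ t i) (j : ι) :
    (⨆ i, s i) ⊓ t j = s j := by
  have hdisj : (⨆ (i) (_ : i ≠ j), s i) ⊓ t j = ⊥ :=
    ((ht j).symm.mono_left (iSup₂_mono fun i _ => hst i)).eq_bot
  rw [iSup_split_single s j, sup_inf_assoc_of_le _ (hst j), hdisj, sup_bot_eq]

namespace ExteriorAlgebra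

variable (R : Type*) {V κ : Type*} [CommRing R] [AddCommGroup V] [Module R V]

theorem span_singleton_prod_map_ι_eq_of_perm (f : κ → V) {l₁ l₂ : List κ} (h : l₁.Perm l₂) :
    R ∙ (l₁.map fun i => ι R (f i)).prod = R ∙ (l₂.map fun i => ι R (f i)).prod := by
  induction h with
  | nil => rfl
  | cons x _ ih => simp only [List.map_cons, List.prod_cons,
    Submodule.span_singleton_mul_eq_map_mulLeft, ih]
  | swap x y l =>
    simp only [List.map_cons, List.prod_cons, ← mul_assoc]
    rw [← neg_eq_of_add_eq_zero_left (ι_add_mul_swap (f x) (f y)), neg_mul,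
      ← Set.neg_singleton, Submodule.span_neg]
  | trans _ _ ih₁ ih₂ => exact ih₁.trans ih₂

variable [LinearOrder κ]

def finsetWedge (f : κ → V) (T : Finset κ) : ExteriorAlgebra R V :=
  ((T.sort (· ≤ ·)).map fun i => ι R (f i)).prod

variable {R}

theorem span_finsetWedge_insert (f : κ → V) {T : Finset κ} {a : κ} (ha : a ∉ T) :
    R ∙ finsetWedge R f (insert a T) = R ∙ (finsetWedge R f T * ι R (f a)) := by
  have hperm : ((insert a T).sort (· ≤ ·)).Perm (T.sort (· ≤ ·) ++ [a]) :=
    ((Finset.sort_perm_toList _ _).trans (Finset.toList_insert ha)).trans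
      (((Finset.sort_perm_toList _ _).symm.cons a).trans (List.perm_append_singleton _ _).symm)
  rw [finsetWedge, span_singleton_prod_map_ι_eq_of_perm R f hperm, List.map_append,
    List.prod_append, finsetWedge, List.map_singleton, List.prod_singleton]

theorem finsetWedge_mul_ι_of_mem (f : κ → V) {T : Finset κ} {a : κ} (ha : a ∈ T) :
    finsetWedge R f T * ι R (f a) = 0 := by
  have hmem := Submodule.mem_span_singleton_self (R := R) (finsetWedge R f T)
  rw [← Finset.insert_erase ha, span_finsetWedge_insert f (Finset.notMem_erase a T),
    Submodule.mem_span_singleton] at hmem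
  obtain ⟨c, hc⟩ := hmem
  rw [Finset.insert_erase ha] at hc
  rw [← hc, smul_mul_assoc, mul_assoc, ι_sq_zero, mul_zero, smul_zero]

theorem span_finsetWedge_card_succ {f : κ → V} (hf : Submodule.span R (Set.range f) = ⊤)
    (D : Finset κ) (p : ℕ) :
    Submodule.span R (finsetWedge R f '' {T | D ⊆ T ∧ T.card = D.card + (p + 1)}) =
      Submodule.span R (finsetWedge R f '' {T | D ⊆ T ∧ T.card = D.card + p}) *
        LinearMap.range (ι R) := by
  have hrange : LinearMap.range (ι R) = Submodule.span R (Set.range fun a => ι R (f a)) := by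
    rw [LinearMap.range_eq_map, ← hf, Submodule.map_span, ← Set.range_comp]
    rfl
  rw [hrange, Submodule.span_mul_span]
  apply le_antisymm
  · rw [Submodule.span_le]
    rintro _ ⟨T, ⟨hDT, hT⟩, rfl⟩
    obtain ⟨a, haT, haD⟩ : ∃ a ∈ T, a ∉ D := Finset.exists_of_ssubset
      (Finset.ssubset_iff_subset_ne.2 ⟨hDT, by rintro rfl; omega⟩)
    rw [SetLike.mem_coe, ← Submodule.span_singleton_le_iff_mem, ← Finset.insert_erase haT,
      span_finsetWedge_insert f (Finset.notMem_erase a T), Submodule.span_le,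
      Set.singleton_subset_iff]
    refine Submodule.subset_span (Set.mul_mem_mul ⟨T.erase a, ⟨?_, ?_⟩, rfl⟩ ⟨a, rfl⟩)
    · exact fun x hx => Finset.mem_erase.2 ⟨fun h => haD (h ▸ hx), hDT hx⟩
    · rw [Finset.card_erase_of_mem haT]; omega
  · rw [Submodule.span_le]
    rintro _ ⟨_, ⟨T, ⟨hDT, hT⟩, rfl⟩, _, ⟨a, rfl⟩, rfl⟩
    dsimp only
    by_cases haT : a ∈ T
    · rw [finsetWedge_mul_ι_of_mem f haT]
      exact zero_mem _
    · rw [SetLike.mem_coe, ← Submodule.span_singleton_le_iff_mem,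
        ← span_finsetWedge_insert f haT, Submodule.span_singleton_le_iff_mem]
      refine Submodule.subset_span ⟨insert a T, ⟨hDT.trans (Finset.subset_insert a T), ?_⟩, rfl⟩
      rw [Finset.card_insert_of_notMem haT]; omega

theorem span_finsetWedge_superset {f : κ → V} (hf : Submodule.span R (Set.range f) = ⊤)
    {D : Finset κ} {m : ℕ} (hD : D.card ≤ m) :
    Submodule.span R (finsetWedge R f '' {T | D ⊆ T ∧ T.card = m}) =
      (R ∙ finsetWedge R f D) * LinearMap.range (ι R) ^ (m - D.card) := by
  obtain ⟨p, rfl⟩ := Nat.exists_eq_add_of_le hD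
  rw [Nat.add_sub_cancel_left]
  induction p with
  | zero =>
    have hD : {T | D ⊆ T ∧ T.card = D.card + 0} = {D} := by
      ext T
      exact ⟨fun h => (Finset.eq_of_subset_of_card_le h.1 (h.2.trans (Nat.add_zero _)).le).symm,
        by rintro rfl; simp⟩
    rw [hD, Set.image_singleton, pow_zero, mul_one]
  | succ p ih => rw [span_finsetWedge_card_succ hf, ih (by omega), pow_succ, mul_assoc]

theorem finsetWedge_eq_ιMulti (f : κ → V) (T : Finset κ) :
    finsetWedge R f T = ιMulti R T.card (f ∘ T.orderEmbOfFin rfl) := by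
  rw [ιMulti_apply, finsetWedge]
  congr 1
  apply List.ext_getElem (by simp)
  intro i h₁ h₂
  simp [Finset.orderEmbOfFin_apply]

theorem finsetWedge_ne_zero {K E : Type*} [Field K] [AddCommGroup E] [Module K E] {f : κ → E}
    (hf : LinearIndependent K f) (T : Finset κ) : finsetWedge K f T ≠ 0 := by
  have h := (exteriorPower.ιMulti_family_linearIndependent_field (n := T.card) hf).ne_zero
    (Set.powersetCard.ofCard rfl)
  rw [finsetWedge_eq_ιMulti]
  exact fun h0 => h (Subtype.ext h0)

theorem finsetWedge_map {κ' : Type*} [LinearOrder κ'] (f : κ' → V) (g : κ ↪o κ')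
    (T : Finset κ) :
    finsetWedge R f (T.map g.toEmbedding) = finsetWedge R (f ∘ g) T := by
  rw [finsetWedge, finsetWedge, ← (g.strictMono.strictMonoOn _).map_finsetSort, List.map_map]
  rfl

theorem map_apply_finsetWedge {W : Type*} [AddCommGroup W] [Module R W] (g : V →ₗ[R] W) (f : κ → V)
    (T : Finset κ) : map g (finsetWedge R f T) = finsetWedge R (g ∘ f) T := by
  simp only [finsetWedge, map_list_prod, List.map_map]
  congr 2
  funext i
  simp

end ExteriorAlgebra

namespace AddMonoidAlgebra

section Algebra

variable {R A G : Type*} [CommSemiring R] [Semiring A] [Algebra R A] [AddMonoid G]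

theorem map_lsingle_mul_map_lsingle (c d : G) (X Y : Submodule R A) :
    X.map (lsingle c) * Y.map (lsingle d) = (X * Y).map (lsingle (R := R) (c + d)) := by
  rw [Submodule.mul_eq_span_mul_set, Submodule.mul_eq_span_mul_set X, Submodule.map_span,
    Submodule.map_coe, Submodule.map_coe, ← Set.image2_mul, ← Set.image2_mul,
    Set.image_image2_distrib]
  intro x y
  simp

theorem lsingle_zero_eq_singleZeroAlgHom :
    (lsingle (R := R) (0 : G) : A →ₗ[R] A[G]) = singleZeroAlgHom.toLinearMap :=
  rfl

end Algebra

theorem iSupIndep_range_lsingle (R A G : Type*) [Semiring R] [Semiring A] [Module R A] :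
    iSupIndep fun g : G => LinearMap.range (lsingle (R := R) (S := A) g) := by
  have := LinearMap.iSupIndep_map _ (coeffLinearEquiv (S := A) (M := G) R).symm.injective
    (_root_.iSupIndep_range_lsingle G R A)
  simp only [← LinearMap.range_comp] at this
  exact this

end AddMonoidAlgebra

namespace CPn

open ExteriorAlgebra AddMonoidAlgebra Submodule

variable {n : ℕ}

theorem sum_EE : ∑ i, EE n i = 0 := by
  rw [Fin.sum_univ_succ]
  funext x
  simp [EE, Finset.sum_apply, Pi.single_apply]

theorem EE_succ (j : Fin n) : EE n j.succ = Pi.single j 1 := rfl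

theorem span_range_EE_succ : span ℂ (Set.range fun j : Fin n => EE n j.succ) = ⊤ := by
  convert (Pi.basisFun ℂ (Fin n)).span_eq using 3
  funext j
  rw [EE_succ, Pi.basisFun_apply]

theorem span_range_EE : span ℂ (Set.range (EE n)) = ⊤ :=
  top_le_iff.1 (span_range_EE_succ ▸ span_mono (Set.range_comp_subset_range _ _))

theorem linearIndependent_EE_succAbove (i : Fin (n + 1)) :
    LinearIndependent ℂ (EE n ∘ i.succAbove) := by
  refine linearIndependent_of_top_le_span_of_card_eq_finrank ?_ (by simp)
  rw [← span_range_EE_succ, span_le]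
  rintro _ ⟨j, rfl⟩
  rcases eq_or_ne j.succ i with h | h
  · have hsum : EE n j.succ = -∑ l, EE n (i.succAbove l) := by
      rw [eq_neg_iff_add_eq_zero, h, ← Fin.sum_univ_succAbove _ i, sum_EE]
    change EE n j.succ ∈ _
    rw [hsum]
    exact neg_mem (sum_mem fun l _ => subset_span ⟨l, rfl⟩)
  · obtain ⟨l, hl⟩ := Fin.exists_succAbove_eq h
    exact subset_span ⟨l, by simp [hl]⟩

theorem finsetWedge_EE_ne_zero {T : Finset (Fin (n + 1))} (hT : T.card ≤ n) :
    finsetWedge ℂ (EE n) T ≠ 0 := by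
  obtain ⟨i, -, hi⟩ := Finset.exists_mem_notMem_of_card_lt_card (s := T) (t := Finset.univ)
    (by simpa using hT.trans_lt n.lt_succ_self)
  obtain ⟨U, -, rfl⟩ : ∃ U ⊆ Finset.univ, T = U.map (Fin.succAboveOrderEmb i).toEmbedding := by
    rw [← Finset.subset_map_iff]
    intro j hj
    obtain ⟨l, hl⟩ := Fin.exists_succAbove_eq (ne_of_mem_of_not_mem hj hi)
    exact Finset.mem_map.2 ⟨l, Finset.mem_univ l, hl⟩
  rw [finsetWedge_map]
  exact finsetWedge_ne_zero (linearIndependent_EE_succAbove i) U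

theorem q_single (i : Fin (n + 1)) : q n (Pi.single i 1) = EE n i := by
  funext j
  induction i using Fin.cases with
  | zero => simp [q, EE, Fin.succ_ne_zero]
  | succ s => simp [q, EE, Pi.single_apply, (Fin.succ_ne_zero s).symm]

theorem pstar_single_wedgeT (c : Fin (n + 1) → ℤ) (T : Finset (Fin (n + 1))) :
    pstar n (single c (wedgeT n T)) = single (fun j => c j.succ) (finsetWedge ℂ (EE n) T) := by
  have hq : ExteriorAlgebra.map (q n) (wedgeT n T) = finsetWedge ℂ (EE n) T := by
    rw [wedgeT, ← finsetWedge, map_apply_finsetWedge]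
    congr 1
    funext i
    exact q_single i
  rw [← hq]
  simp [pstar]

theorem sum_mext (I : Fin n → ℤ) : ∑ i, mext n I i = 0 := by
  simp [mext, Fin.sum_univ_succ]

theorem mext_eq_of_sum_eq_zero {m : Fin (n + 1) → ℤ} (hm : ∑ i, m i = 0) :
    mext n (fun j => m j.succ) = m := by
  funext i
  induction i using Fin.cases with
  | zero =>
    rw [Fin.sum_univ_succ, add_eq_zero_iff_eq_neg] at hm
    exact hm.symm
  | succ j => rfl

theorem exists_weight_eq_iff {I : Fin n → ℤ} {T : Finset (Fin (n + 1))} :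
    (∃ b : Fin (n + 1) → ℕ, ∑ i, b i = T.card ∧
        (fun j => (b j.succ : ℤ) - if j.succ ∈ T then 1 else 0) = I) ↔
      (∀ i, -1 ≤ mext n I i) ∧ deg1Set n I ⊆ T := by
  have card_eq : ∑ i, (if i ∈ T then (1 : ℤ) else 0) = T.card := by simp
  constructor
  · rintro ⟨b, hb, rfl⟩
    have hm := mext_eq_of_sum_eq_zero (m := fun i => (b i : ℤ) - if i ∈ T then 1 else 0)
      (by rw [Finset.sum_sub_distrib, card_eq, ← Nat.cast_sum, hb, sub_self])
    refine ⟨fun i => ?_, fun i hi => ?_⟩ <;>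
      simp only [deg1Set, Finset.mem_filter, Finset.mem_univ, true_and, hm] at *
    · split_ifs <;> omega
    · by_contra hiT
      rw [if_neg hiT] at hi
      omega
  · rintro ⟨hI, hD⟩
    have hnonneg : ∀ i, 0 ≤ mext n I i + if i ∈ T then 1 else 0 := fun i => by
      have := hI i
      by_cases hiT : i ∈ T
      · rw [if_pos hiT]; omega
      · have : mext n I i ≠ -1 := fun h => hiT (hD (by simp [deg1Set, h]))
        rw [if_neg hiT]; omega
    refine ⟨fun i => (mext n I i + if i ∈ T then 1 else 0).toNat, ?_, ?_⟩
    · zify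
      simp only [Int.toNat_of_nonneg (hnonneg _), Finset.sum_add_distrib, sum_mext, card_eq,
        zero_add]
    · funext j
      rw [Int.toNat_of_nonneg (hnonneg _), add_sub_cancel_right]
      rfl

theorem H0_eq_iSup_map_span (k : ℕ) :
    H0 n k = ⨆ I ∈ Sk n k,
      (span ℂ (finsetWedge ℂ (EE n) '' {T | deg1Set n I ⊆ T ∧ T.card = k})).map
        (lsingle (R := ℂ) I) := by
  have hgen : pstar n '' {x | ∃ (b : Fin (n + 1) → ℕ) (T : Finset (Fin (n + 1))),
        T.card = k ∧ ∑ i, b i = k ∧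
          x = single (fun i => (b i : ℤ) - if i ∈ T then 1 else 0) (wedgeT n T)} =
      ⋃ I ∈ Sk n k,
        lsingle (R := ℂ) I '' (finsetWedge ℂ (EE n) '' {T | deg1Set n I ⊆ T ∧ T.card = k}) := by
    ext x
    simp only [Set.mem_image, Set.mem_iUnion, Set.mem_ofPred_eq, exists_prop]
    constructor
    · rintro ⟨_, ⟨b, T, hT, hb, rfl⟩, rfl⟩
      obtain ⟨hI, hD⟩ := exists_weight_eq_iff.1 ⟨b, hT ▸ hb, rfl⟩
      exact ⟨_, ⟨hI, (Finset.card_le_card hD).trans hT.le⟩, _, ⟨T, ⟨hD, hT⟩, rfl⟩,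
        by rw [pstar_single_wedgeT]; rfl⟩
    · rintro ⟨I, hI, _, ⟨T, ⟨hD, hT⟩, rfl⟩, rfl⟩
      obtain ⟨b, hb, hbI⟩ := exists_weight_eq_iff.2 ⟨hI.1, hD⟩
      exact ⟨_, ⟨b, T, hT, hT ▸ hb, rfl⟩, by rw [pstar_single_wedgeT, ← hbI]; rfl⟩
  rw [H0, Ftilde, map_span, hgen, span_iUnion₂]
  simp_rw [span_image]

theorem VI_eq_single (I : Fin n → ℤ) : VI n I = single 0 (EI n I) := by
  rw [EI, ← singleZeroAlgHom_apply (R := ℂ), map_list_prod, List.map_map]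
  rfl

theorem chiVI_eq_single (I : Fin n → ℤ) : chiVI n I = single I (EI n I) := by
  rw [chiVI, χ, VI_eq_single, AddMonoidAlgebra.single_mul_single, add_zero, one_mul]

theorem W_eq_map_range_ι : W n = (LinearMap.range (ι ℂ)).map (lsingle (R := ℂ) 0) := by
  have hgen : {x | ∃ i : Fin (n + 1), i ≠ 0 ∧ x = v n i} =
      lsingle (R := ℂ) 0 '' (ι ℂ '' Set.range fun j : Fin n => EE n j.succ) := by
    ext x
    constructor
    · rintro ⟨i, hi, rfl⟩
      obtain ⟨j, rfl⟩ := Fin.exists_succ_eq.2 hi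
      exact ⟨_, ⟨_, ⟨j, rfl⟩, rfl⟩, rfl⟩
    · rintro ⟨_, ⟨_, ⟨j, rfl⟩, rfl⟩, rfl⟩
      exact ⟨j.succ, j.succ_ne_zero, rfl⟩
  rw [W, hgen, span_image, span_image, span_range_EE_succ, Submodule.map_top]

theorem VIk_eq_map (I : Fin n → ℤ) (k : ℕ) :
    VIk n I k =
      ((ℂ ∙ EI n I) * LinearMap.range (ι ℂ) ^ (k - wt n I)).map (lsingle (R := ℂ) I) := by
  have hspan : ℂ ∙ single I (EI n I) = (ℂ ∙ EI n I).map (lsingle (R := ℂ) I) := by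
    rw [map_span, Set.image_singleton]
    rfl
  rw [VIk, chiVI_eq_single, W_eq_map_range_ι, lsingle_zero_eq_singleZeroAlgHom,
    ← Submodule.map_pow, ← lsingle_zero_eq_singleZeroAlgHom, hspan, map_lsingle_mul_map_lsingle,
    add_zero]

theorem VIk_eq_map_span {I : Fin n → ℤ} {k : ℕ} (hI : wt n I ≤ k) :
    VIk n I k =
      (span ℂ (finsetWedge ℂ (EE n) '' {T | deg1Set n I ⊆ T ∧ T.card = k})).map
        (lsingle (R := ℂ) I) := by
  rw [VIk_eq_map, span_finsetWedge_superset span_range_EE hI]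
  rfl

theorem H0_eq_iSup_VIk (k : ℕ) : H0 n k = ⨆ I ∈ Sk n k, VIk n I k := by
  rw [H0_eq_iSup_map_span]
  exact iSup_congr fun I => iSup_congr fun hI => (VIk_eq_map_span hI.2).symm

theorem VIk_le_range (I : Fin n → ℤ) (k : ℕ) :
    VIk n I k ≤ LinearMap.range (lsingle (R := ℂ) I) := by
  rw [VIk_eq_map]
  exact LinearMap.map_le_range

theorem VIk_ne_bot {k : ℕ} (hk : k ≤ n) {I : Fin n → ℤ} (hI : I ∈ Sk n k) : VIk n I k ≠ ⊥ := by
  obtain ⟨T, hDT, -, hT⟩ := Finset.exists_subsuperset_card_eq (Finset.subset_univ (deg1Set n I))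
    hI.2 (by simpa using hk.trans n.le_succ)
  intro hbot
  have hmem : single I (finsetWedge ℂ (EE n) T) ∈ VIk n I k := by
    rw [VIk_eq_map_span hI.2]
    exact mem_map_of_mem (subset_span ⟨T, ⟨hDT, hT⟩, rfl⟩)
  rw [hbot, mem_bot, single_eq_zero] at hmem
  exact finsetWedge_EE_ne_zero (hT ▸ hk) hmem

theorem act_single (t : Fin n → ℂˣ) (J : Fin n → ℤ) (ω : ExteriorAlgebra ℂ (Fin n → ℂ)) :
    act n t (single J ω) = (∏ j, (t j : ℂ) ^ J j) • single J ω := by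
  simp [act]

theorem coeff_act (t : Fin n → ℂˣ) (x : MV n) (J : Fin n → ℤ) :
    (act n t x).coeff J = (∏ j, (t j : ℂ) ^ J j) • x.coeff J := by
  induction x using AddMonoidAlgebra.induction_linear with
  | zero => simp
  | add x y hx hy => simp [hx, hy]
  | single K ω =>
    rw [act_single]
    by_cases h : K = J
    · subst h; simp
    · simp [Finsupp.single_eq_of_ne' h]

theorem exists_prod_zpow_ne {I J : Fin n → ℤ} (h : J ≠ I) :
    ∃ t : Fin n → ℂˣ, ∏ j, (t j : ℂ) ^ J j ≠ ∏ j, (t j : ℂ) ^ I j := by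
  obtain ⟨j₀, hj₀⟩ := Function.ne_iff.1 h
  set t : Fin n → ℂˣ := Pi.mulSingle j₀ (Units.mk0 2 two_ne_zero)
  have ht : ∀ K : Fin n → ℤ, ∏ j, (t j : ℂ) ^ K j = ((2 : ℝ) ^ K j₀ : ℝ) := fun K => by
    rw [Finset.prod_eq_single j₀ (fun j _ hj => by simp [t, hj]) (by simp)]
    simp [t]
  refine ⟨t, ?_⟩
  rw [ht, ht, Ne, Complex.ofReal_inj]
  exact fun h2 => hj₀ (zpow_right_injective₀ two_pos (by norm_num) h2)

theorem weightSpace_eq_range (I : Fin n → ℤ) :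
    ⨅ t : Fin n → ℂˣ, LinearMap.ker
        (act n t - (∏ j, (t j : ℂ) ^ (I j)) • (LinearMap.id : MV n →ₗ[ℂ] MV n)) =
      LinearMap.range (lsingle (R := ℂ) I) := by
  apply le_antisymm
  · intro x hx
    simp only [mem_iInf, LinearMap.mem_ker, LinearMap.sub_apply, LinearMap.smul_apply,
      LinearMap.id_apply, sub_eq_zero] at hx
    refine ⟨x.coeff I, AddMonoidAlgebra.ext (Finsupp.ext fun J => ?_)⟩
    rcases eq_or_ne J I with rfl | hJ
    · simp
    · obtain ⟨t, ht⟩ := exists_prod_zpow_ne hJ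
      have h := congrArg (fun y : MV n => y.coeff J) (hx t)
      simp only [coeff_act, coeff_smul, Finsupp.smul_apply] at h
      have hJ0 : x.coeff J = 0 := by
        rw [← sub_eq_zero, ← sub_smul, smul_eq_zero] at h
        exact h.resolve_left (sub_ne_zero.2 ht)
      simp [hJ, hJ0]
  · rintro _ ⟨ω, rfl⟩
    simp [mem_iInf, act_single]

theorem iSupIndep_VIk (k : ℕ) : iSupIndep fun I : Sk n k => VIk n I k :=
  ((AddMonoidAlgebra.iSupIndep_range_lsingle ℂ (ExteriorAlgebra ℂ (Fin n → ℂ)) _).comp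
    Subtype.val_injective).mono fun I => VIk_le_range I.1 k

theorem H0_inf_range_lsingle (k : ℕ) (I : Fin n → ℤ) :
    H0 n k ⊓ LinearMap.range (lsingle (R := ℂ) I) = ⨆ (_ : I ∈ Sk n k), VIk n I k := by
  rw [H0_eq_iSup_VIk]
  exact (AddMonoidAlgebra.iSupIndep_range_lsingle ℂ _ _).iSup_inf_eq_of_le
    (fun J => iSup_le fun _ => VIk_le_range J k) I

/-- The (ℂ*)ⁿ-representation on H⁰(ℂPⁿ, ∧ᵏ𝒯) induced by the torus
action has weight space decomposition H⁰(X, ∧ᵏ𝒯) = ⊕_{I ∈ S_k} V_I^k: the V_I^k span,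
the family is independent, for I ∈ S_k the weight space of weight I is exactly V_I^k
(and it is nonzero, so S_k is exactly the set of weights), and for I ∉ S_k the weight
space of weight I is zero. -/
theorem weight_decomposition_of_multivector_fields (n k : ℕ) (hk : k ≤ n) :
    H0 n k = (⨆ I ∈ Sk n k, VIk n I k) ∧
    iSupIndep (fun I : (Sk n k) => VIk n (I : Fin n → ℤ) k) ∧
    (∀ I ∈ Sk n k,
      H0 n k ⊓ (⨅ t : Fin n → ℂˣ, LinearMap.ker
          (act n t - (∏ j, (t j : ℂ) ^ (I j)) • (LinearMap.id : MV n →ₗ[ℂ] MV n)))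
        = VIk n I k) ∧
    (∀ I ∈ Sk n k, VIk n I k ≠ ⊥) ∧
    (∀ I ∉ Sk n k,
      H0 n k ⊓ (⨅ t : Fin n → ℂˣ, LinearMap.ker
          (act n t - (∏ j, (t j : ℂ) ^ (I j)) • (LinearMap.id : MV n →ₗ[ℂ] MV n)))
        = ⊥) := by
  refine ⟨H0_eq_iSup_VIk k, ?_, fun I hI => ?_, fun I hI => VIk_ne_bot hk hI, fun I hI => ?_⟩
  · exact iSupIndep_VIk k
  · rw [weightSpace_eq_range, H0_inf_range_lsingle, iSup_pos hI]
  · rw [weightSpace_eq_range, H0_inf_range_lsingle, iSup_neg hI]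

end CPn
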